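/- arXiv:0903.4555 — 6 statements merged into one kernel-verified Lean document; each statement's English description precedes it below -/
import Mathlib

section
/- For 1 ≤ p < ∞, s > 0, and any x ∈ ℓ^p, the tail-norm identity Σ_{n≥k} |(h_p^(s)(x))_n|^p = (Σ_{n≥k} |x_n|^p)^s holds for every k ≥ 1; in particular ‖h_p^(s)(x)‖_p^p = ‖x‖_p^{ps}. -/
open scoped ENNReal

noncomputable def lpTail (p : ℝ≥0∞) (x : ℕ → ℂ) (n : ℕ) : ℝ :=
  ∑' k : ℕ, ‖x (n + k)‖ ^ p.toReal

noncomputable def hMap (p : ℝ≥0∞) (s : ℝ) (x : ℕ → ℂ) (n : ℕ) : ℂ :=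
  if x n = 0 then 0
  else (x n / ‖x n‖) *
    ((((lpTail p x n) ^ s - (lpTail p x (n + 1)) ^ s) ^ (1 / p.toReal) : ℝ) : ℂ)

/-!
By construction `|h(x)_n|^p = T_n^s - T_{n+1}^s` for the tails `T_n = ∑_{k ≥ n} |x_k|^p`. Since
`T_n` decreases to `0` and `s > 0`, so does `T_n^s`, and `∑_{n ≥ k} |h(x)_n|^p` telescopes to
`T_k^s`; for `k = 0` this is `‖x‖_p^{ps}`.
-/

open Filter Topology

theorem Antitone.hasSum_sub_succ {F : ℕ → ℝ} {l : ℝ} (hF : Antitone F)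
    (hlim : Tendsto F atTop (𝓝 l)) : HasSum (fun n => F n - F (n + 1)) (F 0 - l) := by
  rw [hasSum_iff_tendsto_nat_of_nonneg fun n => sub_nonneg.2 (hF n.le_succ)]
  simp_rw [Finset.sum_range_sub']
  exact tendsto_const_nhds.sub hlim

section lpTail

variable {p : ℝ≥0∞} {x : ℕ → ℂ}

theorem lpTail_nonneg (n : ℕ) : 0 ≤ lpTail p x n :=
  tsum_nonneg fun _ => Real.rpow_nonneg (norm_nonneg _) _

theorem tendsto_lpTail_zero : Tendsto (lpTail p x) atTop (𝓝 0) :=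
  (tendsto_sum_nat_add fun n => ‖x n‖ ^ p.toReal).congr fun n => by
    simp only [lpTail, add_comm]

theorem lpTail_eq_add_lpTail_succ (hx : Summable fun n => ‖x n‖ ^ p.toReal) (n : ℕ) :
    lpTail p x n = ‖x n‖ ^ p.toReal + lpTail p x (n + 1) := by
  have hxn : Summable fun k => ‖x (n + k)‖ ^ p.toReal :=
    hx.comp_injective (add_right_injective n)
  rw [lpTail, hxn.tsum_eq_zero_add, lpTail]
  simp only [add_zero, add_assoc, add_comm 1]

theorem antitone_lpTail (hx : Summable fun n => ‖x n‖ ^ p.toReal) : Antitone (lpTail p x) :=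
  antitone_nat_of_succ_le fun n => by
    rw [lpTail_eq_add_lpTail_succ hx n]
    exact le_add_of_nonneg_left (Real.rpow_nonneg (norm_nonneg _) _)

theorem norm_hMap_rpow (hx : Summable fun n => ‖x n‖ ^ p.toReal) (hp : p.toReal ≠ 0) {s : ℝ}
    (hs : 0 ≤ s) (n : ℕ) :
    ‖hMap p s x n‖ ^ p.toReal = lpTail p x n ^ s - lpTail p x (n + 1) ^ s := by
  by_cases hxn : x n = 0
  · have hT : lpTail p x n = lpTail p x (n + 1) := by
      rw [lpTail_eq_add_lpTail_succ hx n, hxn, norm_zero, Real.zero_rpow hp, zero_add]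
    rw [hMap, if_pos hxn, hT, sub_self, norm_zero, Real.zero_rpow hp]
  · have hd : 0 ≤ lpTail p x n ^ s - lpTail p x (n + 1) ^ s :=
      sub_nonneg.2 <| Real.rpow_le_rpow (lpTail_nonneg _)
        (antitone_lpTail hx n.le_succ) hs
    have hunit : ‖x n / (‖x n‖ : ℂ)‖ = 1 := by
      rw [norm_div, Complex.norm_real, norm_norm, div_self (norm_ne_zero_iff.2 hxn)]
    rw [hMap, if_neg hxn, norm_mul, hunit, one_mul, Complex.norm_real, Real.norm_eq_abs,
      abs_of_nonneg (Real.rpow_nonneg hd _), one_div, Real.rpow_inv_rpow hd hp]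

theorem hasSum_norm_hMap_rpow (hx : Summable fun n => ‖x n‖ ^ p.toReal)
    (hp : p.toReal ≠ 0) {s : ℝ} (hs : 0 < s) (k : ℕ) :
    HasSum (fun n => ‖hMap p s x (k + n)‖ ^ p.toReal) (lpTail p x k ^ s) := by
  have hF : Antitone fun n => lpTail p x (k + n) ^ s := fun m n hmn =>
    Real.rpow_le_rpow (lpTail_nonneg _) (antitone_lpTail hx (by omega)) hs.le
  have hlim : Tendsto (fun n => lpTail p x (k + n) ^ s) atTop (𝓝 0) := by
    have hT := (tendsto_lpTail_zero (p := p) (x := x)).comp (tendsto_add_atTop_nat k)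
    simpa [Real.zero_rpow hs.ne', Function.comp_def, add_comm _ k] using
      hT.rpow_const (Or.inr hs.le)
  simpa [norm_hMap_rpow hx hp hs.le, ← add_assoc] using hF.hasSum_sub_succ hlim

end lpTail

/-- the tail-norm identity for `h_p^(s)`; in particular
`‖h_p^(s)(x)‖_p^p = ‖x‖_p^{ps}`. -/
theorem hMap_tail_identity (p : ℝ≥0∞) [Fact (1 ≤ p)] (hp : p ≠ ∞) (s : ℝ) (hs : 0 < s)
    (x : lp (fun _ : ℕ => ℂ) p) :
    (∀ k : ℕ, ∑' n : ℕ, ‖hMap p s x (k + n)‖ ^ p.toReal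
        = (∑' n : ℕ, ‖x (k + n)‖ ^ p.toReal) ^ s) ∧
    ‖x‖ ^ (p.toReal * s) = ∑' n : ℕ, ‖hMap p s x n‖ ^ p.toReal := by
  have hpt : 0 < p.toReal :=
    ENNReal.toReal_pos (zero_lt_one.trans_le (Fact.out : (1 : ℝ≥0∞) ≤ p)).ne' hp
  have htail (k : ℕ) := (hasSum_norm_hMap_rpow ((lp.memℓp x).summable hpt) hpt.ne' hs k).tsum_eq
  refine ⟨htail, ?_⟩
  rw [Real.rpow_mul (norm_nonneg x), lp.norm_rpow_eq_tsum hpt]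
  simpa [lpTail] using (htail 0).symm
end

section
/- Let 1 ≤ p < ∞ and let λ, ω be positive real numbers with χ(λ) = χ(ω), where χ(t) = 1 if t > 1, 0 if t = 1, and −1 if t < 1. Then the constant-weighted backward shifts λB_p and ωB_p on ℓ^p are topologically conjugate: there exists a homeomorphism h : ℓ^p → ℓ^p with h ∘ (λB_p) = (ωB_p) ∘ h. -/
open scoped ENNReal

/-- The sign-type function `χ` from the paper. -/
noncomputable def chi (t : ℝ) : ℝ :=
  if t > 1 then 1 else if t = 1 then 0 else -1

/-!
For `β > 0` let `tailPow p β` rescale each coordinate `x n`, keeping its direction, so that the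
tail sums of the image are `(∑_{k ≥ n} ‖x k‖ ^ p) ^ β`. Then `tailPow p β⁻¹` inverts it, it
commutes with the backward shift and is `β`-homogeneous for positive scalars, so it conjugates
`λB` to `λ ^ β B`; and `χ(λ) = χ(ω)` is exactly the condition that `ω = λ ^ α` for some `α > 0`.
Continuity comes from `‖tailPow p β x‖ = ‖x‖ ^ β` and continuity of each coordinate, because in
`ℓ^p` coordinatewise convergence together with convergence of the norms implies norm convergence.
-/

open Filter Topology

theorem hasSum_sub_succ_of_antitone {f : ℕ → ℝ} {l : ℝ} (hf : Antitone f)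
    (hl : Tendsto f atTop (𝓝 l)) : HasSum (fun n => f n - f (n + 1)) (f 0 - l) := by
  rw [hasSum_iff_tendsto_nat_of_nonneg fun n => sub_nonneg.2 (hf n.le_succ)]
  simp_rw [Finset.sum_range_sub']
  exact tendsto_const_nhds.sub hl

section TailSum

variable {E : Type*} [NormedAddCommGroup E] {q β : ℝ} {x : ℕ → E}

noncomputable def tailSum (q : ℝ) (x : ℕ → E) (n : ℕ) : ℝ :=
  ∑' k, ‖x (k + n)‖ ^ q

theorem tailSum_nonneg (q : ℝ) (x : ℕ → E) (n : ℕ) : 0 ≤ tailSum q x n :=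
  tsum_nonneg fun _ => Real.rpow_nonneg (norm_nonneg _) _

theorem tailSum_eq_add (hx : Summable fun n => ‖x n‖ ^ q) (n : ℕ) :
    tailSum q x n = ‖x n‖ ^ q + tailSum q x (n + 1) := by
  simp only [tailSum, ((summable_nat_add_iff n).2 hx).tsum_eq_zero_add, zero_add, add_right_comm,
    add_assoc]

theorem tailSum_antitone (hx : Summable fun n => ‖x n‖ ^ q) : Antitone (tailSum q x) :=
  antitone_nat_of_succ_le fun n => by
    rw [tailSum_eq_add hx n]
    exact le_add_of_nonneg_left (Real.rpow_nonneg (norm_nonneg _) _)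

theorem tendsto_tailSum_atTop (q : ℝ) (x : ℕ → E) : Tendsto (tailSum q x) atTop (𝓝 0) :=
  tendsto_sum_nat_add fun k => ‖x k‖ ^ q

theorem tailSum_shift (q : ℝ) (x : ℕ → E) (n : ℕ) :
    tailSum q (fun k => x (k + 1)) n = tailSum q x (n + 1) := by
  simp only [tailSum, add_assoc]

theorem tailSum_rpow_sub_nonneg (hβ : 0 ≤ β) (hx : Summable fun n => ‖x n‖ ^ q) (n : ℕ) :
    0 ≤ tailSum q x n ^ β - tailSum q x (n + 1) ^ β :=
  sub_nonneg.2 <| Real.rpow_le_rpow (tailSum_nonneg _ _ _) (tailSum_antitone hx n.le_succ) hβ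

theorem tailSum_sub_rpow_inv_le (hq : 1 ≤ q) {x y : ℕ → E} (hx : Summable fun n => ‖x n‖ ^ q)
    (hy : Summable fun n => ‖y n‖ ^ q) (N : ℕ) :
    tailSum q (x - y) N ^ q⁻¹ ≤ tailSum q x N ^ q⁻¹ + tailSum q y N ^ q⁻¹ := by
  obtain ⟨hsum, hle⟩ := Real.Lp_add_le_tsum_of_nonneg hq (fun k => norm_nonneg (x (k + N)))
    (fun k => norm_nonneg (y (k + N))) ((summable_nat_add_iff N).2 hx)
    ((summable_nat_add_iff N).2 hy)
  have hpt : ∀ k, ‖(x - y) (k + N)‖ ^ q ≤ (‖x (k + N)‖ + ‖y (k + N)‖) ^ q := fun k =>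
    Real.rpow_le_rpow (norm_nonneg _) (norm_sub_le _ _) (by linarith)
  rw [← one_div]
  refine le_trans (Real.rpow_le_rpow (tailSum_nonneg _ _ _) ?_ (by positivity)) hle
  exact Summable.tsum_le_tsum hpt (hsum.of_nonneg_of_le (fun _ => by positivity) hpt) hsum

variable [NormedSpace ℝ E]

theorem tailSum_smul {c : ℝ} (hc : 0 ≤ c) (q : ℝ) (x : ℕ → E) (n : ℕ) :
    tailSum q (c • x) n = c ^ q * tailSum q x n := by
  simp only [tailSum, Pi.smul_apply, norm_smul, Real.norm_of_nonneg hc,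
    Real.mul_rpow hc (norm_nonneg _), tsum_mul_left]

noncomputable def tailPow (q β : ℝ) (x : ℕ → E) (n : ℕ) : E :=
  ((tailSum q x n ^ β - tailSum q x (n + 1) ^ β) ^ q⁻¹ / ‖x n‖) • x n

theorem norm_tailPow (hq : 0 < q) (hβ : 0 < β) (hx : Summable fun n => ‖x n‖ ^ q) (n : ℕ) :
    ‖tailPow q β x n‖ = (tailSum q x n ^ β - tailSum q x (n + 1) ^ β) ^ q⁻¹ := by
  rcases eq_or_ne (x n) 0 with hxn | hxn
  · have hsucc : tailSum q x n = tailSum q x (n + 1) := by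
      simpa [hxn, Real.zero_rpow hq.ne'] using tailSum_eq_add hx n
    simp [tailPow, hxn, hsucc, Real.zero_rpow (inv_ne_zero hq.ne')]
  · rw [tailPow, norm_smul, Real.norm_of_nonneg (div_nonneg (Real.rpow_nonneg
      (tailSum_rpow_sub_nonneg hβ.le hx n) _) (norm_nonneg _)),
      div_mul_cancel₀ _ (norm_ne_zero_iff.2 hxn)]

theorem hasSum_tailPow (hq : 0 < q) (hβ : 0 < β) (hx : Summable fun n => ‖x n‖ ^ q) (n : ℕ) :
    HasSum (fun k => ‖tailPow q β x (k + n)‖ ^ q) (tailSum q x n ^ β) := by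
  have hanti : Antitone fun k => tailSum q x (k + n) ^ β := fun i j hij =>
    Real.rpow_le_rpow (tailSum_nonneg _ _ _) (tailSum_antitone hx (by omega)) hβ.le
  have hlim : Tendsto (fun k => tailSum q x (k + n) ^ β) atTop (𝓝 0) := by
    simpa [Real.zero_rpow hβ.ne'] using
      ((tendsto_tailSum_atTop q x).comp (tendsto_add_atTop_nat n)).rpow_const (Or.inr hβ.le)
  convert hasSum_sub_succ_of_antitone hanti hlim using 1
  · ext k
    rw [norm_tailPow hq hβ hx, Real.rpow_inv_rpow (tailSum_rpow_sub_nonneg hβ.le hx _) hq.ne',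
      add_right_comm]
  · simp

theorem summable_tailPow (hq : 0 < q) (hβ : 0 < β) (hx : Summable fun n => ‖x n‖ ^ q) :
    Summable fun n => ‖tailPow q β x n‖ ^ q :=
  (hasSum_tailPow hq hβ hx 0).summable

theorem tailSum_tailPow (hq : 0 < q) (hβ : 0 < β) (hx : Summable fun n => ‖x n‖ ^ q) (n : ℕ) :
    tailSum q (tailPow q β x) n = tailSum q x n ^ β :=
  (hasSum_tailPow hq hβ hx n).tsum_eq

theorem tailPow_inv_tailPow (hq : 0 < q) (hβ : 0 < β) (hx : Summable fun n => ‖x n‖ ^ q) :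
    tailPow q β⁻¹ (tailPow q β x) = x := by
  funext n
  have htail : ∀ m, tailSum q (tailPow q β x) m ^ β⁻¹ = tailSum q x m := fun m => by
    rw [tailSum_tailPow hq hβ hx, Real.rpow_rpow_inv (tailSum_nonneg _ _ _) hβ.ne']
  have hdiff : tailSum q x n - tailSum q x (n + 1) = ‖x n‖ ^ q := by
    rw [tailSum_eq_add hx n]; ring
  rw [tailPow, htail, htail, hdiff, Real.rpow_rpow_inv (norm_nonneg _) hq.ne',
    norm_tailPow hq hβ hx]
  rcases eq_or_ne (x n) 0 with hxn | hxn
  · simp [tailPow, hxn]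
  have hD : 0 < (tailSum q x n ^ β - tailSum q x (n + 1) ^ β) ^ q⁻¹ := by
    have hlt : tailSum q x (n + 1) < tailSum q x n := by
      rw [tailSum_eq_add hx n]
      exact lt_add_of_pos_left _ (Real.rpow_pos_of_pos (norm_pos_iff.2 hxn) q)
    exact Real.rpow_pos_of_pos (sub_pos.2 <| Real.rpow_lt_rpow (tailSum_nonneg _ _ _) hlt hβ) _
  rw [tailPow, smul_smul, div_mul_div_comm, mul_comm, div_self (by positivity), one_smul]

theorem tailPow_shift (q β : ℝ) (x : ℕ → E) :
    tailPow q β (fun k => x (k + 1)) = fun n => tailPow q β x (n + 1) := by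
  funext n
  simp only [tailPow, tailSum_shift]

theorem tailPow_smul (hq : 0 < q) (hβ : 0 ≤ β) (hx : Summable fun n => ‖x n‖ ^ q) {c : ℝ}
    (hc : 0 < c) : tailPow q β (c • x) = c ^ β • tailPow q β x := by
  funext n
  have hscale : ∀ m, (tailSum q (c • x) m) ^ β = (c ^ β) ^ q * tailSum q x m ^ β := fun m => by
    rw [tailSum_smul hc.le, Real.mul_rpow (by positivity) (tailSum_nonneg _ _ _),
      ← Real.rpow_mul hc.le, ← Real.rpow_mul hc.le, mul_comm q]
  rw [Pi.smul_apply, tailPow, tailPow, hscale, hscale, ← mul_sub,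
    Real.mul_rpow (by positivity) (tailSum_rpow_sub_nonneg hβ hx n),
    Real.rpow_rpow_inv (by positivity) hq.ne', Pi.smul_apply, norm_smul,
    Real.norm_of_nonneg hc.le, smul_smul, smul_smul]
  congr 1
  field_simp

end TailSum

namespace lp

variable {E : Type*} [NormedAddCommGroup E] {p : ℝ≥0∞} [Fact (1 ≤ p)]

theorem one_le_toReal (hp : p ≠ ∞) : 1 ≤ p.toReal := (ENNReal.dichotomy p).resolve_left hp

theorem toReal_pos (hp : p ≠ ∞) : 0 < p.toReal := zero_lt_one.trans_le (one_le_toReal hp)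

theorem summable_norm_rpow (hp : p ≠ ∞) (f : lp (fun _ : ℕ => E) p) :
    Summable fun n => ‖f n‖ ^ p.toReal :=
  (lp.memℓp f).summable (toReal_pos hp)

theorem norm_rpow_eq_sum_add_tailSum (hp : p ≠ ∞) (f : lp (fun _ : ℕ => E) p) (N : ℕ) :
    ‖f‖ ^ p.toReal = ∑ i ∈ Finset.range N, ‖f i‖ ^ p.toReal + tailSum p.toReal f N := by
  rw [lp.norm_rpow_eq_tsum (toReal_pos hp), tailSum,
    (summable_norm_rpow hp f).sum_add_tsum_nat_add N]

theorem norm_rpow_eq_tailSum_zero (hp : p ≠ ∞) (f : lp (fun _ : ℕ => E) p) :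
    ‖f‖ ^ p.toReal = tailSum p.toReal f 0 := by
  simpa using norm_rpow_eq_sum_add_tailSum hp f 0

theorem norm_le_sum_add_tailSum (hp : p ≠ ∞) (f : lp (fun _ : ℕ => E) p) (N : ℕ) :
    ‖f‖ ≤ (∑ i ∈ Finset.range N, ‖f i‖ ^ p.toReal) ^ p.toReal⁻¹
      + tailSum p.toReal f N ^ p.toReal⁻¹ := by
  have hq := toReal_pos hp
  calc ‖f‖ = (‖f‖ ^ p.toReal) ^ p.toReal⁻¹ := (Real.rpow_rpow_inv (norm_nonneg _) hq.ne').symm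
    _ ≤ _ := by
      rw [norm_rpow_eq_sum_add_tailSum hp f N]
      exact Real.rpow_add_le_add_rpow (by positivity) (tailSum_nonneg _ _ _) (by positivity)
        (inv_le_one_of_one_le₀ (one_le_toReal hp))

variable {α : Type*} {l : Filter α} {F : α → lp (fun _ : ℕ => E) p} {f : lp (fun _ : ℕ => E) p}

theorem tendsto_tailSum (hp : p ≠ ∞) (hF : ∀ n, Tendsto (fun a => F a n) l (𝓝 (f n)))
    (hnorm : Tendsto (fun a => ‖F a‖) l (𝓝 ‖f‖)) (N : ℕ) :
    Tendsto (fun a => tailSum p.toReal (F a) N) l (𝓝 (tailSum p.toReal f N)) := by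
  have hq := toReal_pos hp
  have key : ∀ g : lp (fun _ : ℕ => E) p,
      tailSum p.toReal g N = ‖g‖ ^ p.toReal - ∑ i ∈ Finset.range N, ‖g i‖ ^ p.toReal :=
    fun g => by rw [norm_rpow_eq_sum_add_tailSum hp g N]; ring
  simp only [key]
  exact (hnorm.rpow_const (Or.inr hq.le)).sub
    (tendsto_finsetSum _ fun i _ => ((hF i).norm).rpow_const (Or.inr hq.le))

theorem continuous_tailSum (hp : p ≠ ∞) (N : ℕ) :
    Continuous fun f : lp (fun _ : ℕ => E) p => tailSum p.toReal f N :=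
  continuous_iff_continuousAt.2 fun _ => tendsto_tailSum hp
    (fun n => (lp.lipschitzWith_one_eval p n).continuous.continuousAt)
    continuous_norm.continuousAt N

theorem tendsto_of_tendsto_apply_of_tendsto_norm (hp : p ≠ ∞)
    (hF : ∀ n, Tendsto (fun a => F a n) l (𝓝 (f n)))
    (hnorm : Tendsto (fun a => ‖F a‖) l (𝓝 ‖f‖)) : Tendsto F l (𝓝 f) := by
  have hq := toReal_pos hp
  rw [Metric.tendsto_nhds]
  intro ε hε
  have htail : Tendsto (fun N => 2 * tailSum p.toReal f N ^ p.toReal⁻¹) atTop (𝓝 0) := by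
    simpa [Real.zero_rpow (inv_ne_zero hq.ne')] using
      ((tendsto_tailSum_atTop p.toReal f).rpow_const (Or.inr (inv_nonneg.2 hq.le))).const_mul 2
  obtain ⟨N, hN⟩ := (htail.eventually_lt_const hε).exists
  have hbound : Tendsto (fun a => (∑ i ∈ Finset.range N, ‖(F a - f) i‖ ^ p.toReal) ^ p.toReal⁻¹
      + (tailSum p.toReal (F a) N ^ p.toReal⁻¹ + tailSum p.toReal f N ^ p.toReal⁻¹)) l
      (𝓝 (2 * tailSum p.toReal f N ^ p.toReal⁻¹)) := by
    have hfin : Tendsto (fun a => (∑ i ∈ Finset.range N, ‖(F a - f) i‖ ^ p.toReal)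
        ^ p.toReal⁻¹) l (𝓝 0) := by
      have h := (tendsto_finsetSum (Finset.range N) fun i _ =>
        (((hF i).sub_const (f i)).norm.rpow_const (Or.inr hq.le))).rpow_const
        (Or.inr (inv_nonneg.2 hq.le))
      simpa [Real.zero_rpow hq.ne', Real.zero_rpow (inv_ne_zero hq.ne')] using h
    have htailF := ((tendsto_tailSum hp hF hnorm N).rpow_const
      (Or.inr (inv_nonneg.2 hq.le))).add_const (tailSum p.toReal f N ^ p.toReal⁻¹)
    simpa [two_mul] using hfin.add htailF
  filter_upwards [hbound.eventually_lt_const hN] with a ha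
  rw [dist_eq_norm]
  refine lt_of_le_of_lt ((norm_le_sum_add_tailSum hp (F a - f) N).trans ?_) ha
  gcongr
  exact tailSum_sub_rpow_inv_le (one_le_toReal hp) (summable_norm_rpow hp _)
    (summable_norm_rpow hp _) N

end lp

section TailPowLp

variable {E : Type*} [NormedAddCommGroup E] [NormedSpace ℝ E] {p : ℝ≥0∞} [Fact (1 ≤ p)]
  (hp : p ≠ ∞) {β : ℝ} (hβ : 0 < β)

noncomputable def tailPowLp (f : lp (fun _ : ℕ => E) p) : lp (fun _ : ℕ => E) p :=
  ⟨tailPow p.toReal β f,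
    memℓp_gen <| summable_tailPow (lp.toReal_pos hp) hβ (lp.summable_norm_rpow hp f)⟩

theorem coe_tailPowLp (f : lp (fun _ : ℕ => E) p) :
    ⇑(tailPowLp hp hβ f) = tailPow p.toReal β f := rfl

theorem norm_tailPowLp (f : lp (fun _ : ℕ => E) p) : ‖tailPowLp hp hβ f‖ = ‖f‖ ^ β := by
  have hq := lp.toReal_pos hp
  have h := lp.norm_rpow_eq_tailSum_zero hp (tailPowLp hp hβ f)
  rw [coe_tailPowLp, tailSum_tailPow hq hβ (lp.summable_norm_rpow hp f),
    ← lp.norm_rpow_eq_tailSum_zero hp, ← Real.rpow_mul (norm_nonneg _), mul_comm,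
    Real.rpow_mul (norm_nonneg _)] at h
  exact (Real.rpow_left_injOn hq.ne').eq_iff (norm_nonneg _) (Real.rpow_nonneg (norm_nonneg _) _)
    |>.1 h

theorem continuous_tailPowLp_apply (n : ℕ) :
    Continuous fun f : lp (fun _ : ℕ => E) p => tailPowLp hp hβ f n := by
  have hq := lp.toReal_pos hp
  have hD : Continuous fun f : lp (fun _ : ℕ => E) p =>
      (tailSum p.toReal f n ^ β - tailSum p.toReal f (n + 1) ^ β) ^ p.toReal⁻¹ :=
    (((lp.continuous_tailSum hp n).rpow_const fun _ => Or.inr hβ.le).sub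
      ((lp.continuous_tailSum hp (n + 1)).rpow_const fun _ => Or.inr hβ.le)).rpow_const
      fun _ => Or.inr (inv_nonneg.2 hq.le)
  have heval := (lp.lipschitzWith_one_eval (E := fun _ : ℕ => E) p n).continuous
  refine continuous_iff_continuousAt.2 fun f => ?_
  rcases eq_or_ne (f n) 0 with hfn | hfn
  · -- near a zero coordinate the direction of `g n` is uncontrolled, but only the norm matters
    have hzero : tailPowLp hp hβ f n = 0 := by simp [coe_tailPowLp, tailPow, hfn]
    rw [ContinuousAt, hzero, tendsto_zero_iff_norm_tendsto_zero]
    have hnorm : ∀ g : lp (fun _ : ℕ => E) p, ‖tailPowLp hp hβ g n‖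
        = (tailSum p.toReal g n ^ β - tailSum p.toReal g (n + 1) ^ β) ^ p.toReal⁻¹ :=
      fun g => norm_tailPow hq hβ (lp.summable_norm_rpow hp g) n
    have h := (hD.congr fun g => (hnorm g).symm).tendsto f
    rwa [hzero, norm_zero] at h
  · exact (hD.continuousAt.div heval.norm.continuousAt (norm_ne_zero_iff.2 hfn)).smul
      heval.continuousAt

theorem continuous_tailPowLp : Continuous (tailPowLp (E := E) hp hβ) :=
  continuous_iff_continuousAt.2 fun f => lp.tendsto_of_tendsto_apply_of_tendsto_norm hp
    (fun n => (continuous_tailPowLp_apply hp hβ n).continuousAt)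
    (by simpa only [norm_tailPowLp] using
      (continuous_norm.rpow_const fun _ => Or.inr hβ.le).tendsto f)

noncomputable def tailPowHomeomorph : lp (fun _ : ℕ => E) p ≃ₜ lp (fun _ : ℕ => E) p where
  toFun := tailPowLp hp hβ
  invFun := tailPowLp hp (inv_pos.2 hβ)
  left_inv f := lp.ext <| tailPow_inv_tailPow (lp.toReal_pos hp) hβ (lp.summable_norm_rpow hp f)
  right_inv f := lp.ext <| by
    have h := tailPow_inv_tailPow (lp.toReal_pos hp) (inv_pos.2 hβ) (lp.summable_norm_rpow hp f)
    rwa [inv_inv] at h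
  continuous_toFun := continuous_tailPowLp hp hβ
  continuous_invFun := continuous_tailPowLp hp (inv_pos.2 hβ)

theorem coe_tailPowHomeomorph_apply (f : lp (fun _ : ℕ => E) p) :
    ⇑(tailPowHomeomorph hp hβ f) = tailPow p.toReal β f := rfl

end TailPowLp

theorem chi_of_lt_one {t : ℝ} (ht : t < 1) : chi t = -1 := by simp [chi, ht.not_gt, ht.ne]

theorem chi_of_one_lt {t : ℝ} (ht : 1 < t) : chi t = 1 := if_pos ht

theorem chi_one : chi 1 = 0 := by simp [chi]

theorem exists_rpow_eq_of_chi_eq {l w : ℝ} (hl : 0 < l) (hw : 0 < w) (hchi : chi l = chi w) :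
    ∃ α : ℝ, 0 < α ∧ l ^ α = w := by
  rcases lt_trichotomy l 1 with hl1 | rfl | hl1 <;>
    rcases lt_trichotomy w 1 with hw1 | rfl | hw1 <;>
    simp (disch := assumption) only [chi_of_lt_one, chi_of_one_lt, chi_one] at hchi <;>
    try norm_num at hchi
  · exact ⟨_, Real.logb_pos_of_base_lt_one hl hl1 hw hw1, Real.rpow_logb hl hl1.ne hw⟩
  · exact ⟨1, one_pos, Real.one_rpow 1⟩
  · exact ⟨_, Real.logb_pos hl1 hw1, Real.rpow_logb hl hl1.ne' hw⟩

/-- for positive reals `λ, ω` with `χ(λ) = χ(ω)`, the weighted backward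
shifts `λB_p` and `ωB_p` on `ℓ^p` are topologically conjugate. -/
theorem shifts_conjugate_of_chi_eq (p : ℝ≥0∞) [Fact (1 ≤ p)] (hp : p ≠ ∞)
    (l w : ℝ) (hl : 0 < l) (hw : 0 < w) (hchi : chi l = chi w)
    (Bl Bw : lp (fun _ : ℕ => ℂ) p → lp (fun _ : ℕ => ℂ) p)
    (hBl : ∀ (x : lp (fun _ : ℕ => ℂ) p) (n : ℕ), (Bl x : ℕ → ℂ) n = (l : ℂ) * x (n + 1))
    (hBw : ∀ (x : lp (fun _ : ℕ => ℂ) p) (n : ℕ), (Bw x : ℕ → ℂ) n = (w : ℂ) * x (n + 1)) :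
    ∃ h : lp (fun _ : ℕ => ℂ) p ≃ₜ lp (fun _ : ℕ => ℂ) p,
      ∀ x, h (Bl x) = Bw (h x) := by
  obtain ⟨α, hα, rfl⟩ := exists_rpow_eq_of_chi_eq hl hw hchi
  have hq := lp.toReal_pos hp
  refine ⟨tailPowHomeomorph hp hα, fun x => lp.ext ?_⟩
  have hBlx : ⇑(Bl x) = l • fun n => x (n + 1) := funext fun n => by
    rw [hBl, Pi.smul_apply, Complex.real_smul]
  have hsummable : Summable fun n => ‖x (n + 1)‖ ^ p.toReal :=
    (summable_nat_add_iff 1).2 (lp.summable_norm_rpow hp x)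
  rw [coe_tailPowHomeomorph_apply, hBlx, tailPow_smul hq hα.le hsummable hl, tailPow_shift]
  funext n
  rw [hBw, coe_tailPowHomeomorph_apply, Pi.smul_apply, Complex.real_smul]
end

section
/- Let 1 ≤ p < ∞ and 0 < λ < 1 be real. Then λB_p and the unweighted backward shift B_p on ℓ^p are not topologically conjugate: there is no homeomorphism f : ℓ^p → ℓ^p with f ∘ B_p = (λB_p) ∘ f. -/
open scoped ENNReal NNReal
open Filter Topology Set Function Metric

/-!
A point `a` is *uniformly attracting* for `S` if some neighbourhood of `a` is pushed by the
iterates of `S` into every neighbourhood of `a` from some time on; this is a topological property,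
hence preserved by conjugacy. Since `‖(λB)ⁿ x‖ ≤ λⁿ ‖x‖`, the origin uniformly attracts for `λB`,
so a conjugacy would give `B` a uniformly attracting point, and by additivity `0` would then be
one. But `Bⁿ` sends the arbitrarily small vector `r eₙ` to `r e₀`.
-/

def UniformlyAttracts {X : Type*} [TopologicalSpace X] (S : X → X) (a : X) : Prop :=
  ∃ U ∈ 𝓝 a, ∀ V ∈ 𝓝 a, ∀ᶠ n in atTop, MapsTo S^[n] U V

theorem UniformlyAttracts.of_semiconj {X Y : Type*} [TopologicalSpace X] [TopologicalSpace Y]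
    {T : X → X} {S : Y → Y} (g : X ≃ₜ Y) (hg : Semiconj g T S) {a : Y}
    (h : UniformlyAttracts S a) : UniformlyAttracts T (g.symm a) := by
  obtain ⟨U, hU, hSU⟩ := h
  have hg' : Semiconj g.symm S T := hg.inverse_left g.left_inv g.right_inv
  refine ⟨g ⁻¹' U, g.continuous.continuousAt.preimage_mem_nhds (by simpa using hU), ?_⟩
  intro V hV
  have hV' : g.symm ⁻¹' V ∈ 𝓝 a := g.symm.continuous.continuousAt.preimage_mem_nhds hV
  filter_upwards [hSU _ hV'] with n hn x hx
  simpa [(hg'.iterate_right n).eq] using hn hx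

theorem uniformlyAttracts_iff_dist {X : Type*} [PseudoMetricSpace X] {S : X → X} {a : X} :
    UniformlyAttracts S a ↔
      ∃ δ > 0, ∀ ε > 0, ∀ᶠ n in atTop, ∀ x, dist x a < δ → dist (S^[n] x) a < ε := by
  constructor
  · rintro ⟨U, hU, hSU⟩
    obtain ⟨δ, hδ, hδU⟩ := nhds_basis_ball.mem_iff.mp hU
    refine ⟨δ, hδ, fun ε hε => ?_⟩
    filter_upwards [hSU _ (ball_mem_nhds a hε)] with n hn x hx
    exact hn (hδU hx)
  · rintro ⟨δ, hδ, hS⟩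
    refine ⟨ball a δ, ball_mem_nhds a hδ, fun V hV => ?_⟩
    obtain ⟨ε, hε, hεV⟩ := nhds_basis_ball.mem_iff.mp hV
    filter_upwards [hS ε hε] with n hn x hx
    exact hεV (hn x hx)

theorem LipschitzWith.uniformlyAttracts {X : Type*} [PseudoMetricSpace X] {S : X → X} {a : X}
    {K : ℝ≥0} (hK : K < 1) (hS : LipschitzWith K S) (ha : IsFixedPt S a) :
    UniformlyAttracts S a := by
  refine uniformlyAttracts_iff_dist.mpr ⟨1, one_pos, fun ε hε => ?_⟩
  have hpow : Tendsto (fun n => (K : ℝ) ^ n) atTop (𝓝 0) :=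
    tendsto_pow_atTop_nhds_zero_of_lt_one K.coe_nonneg hK
  filter_upwards [hpow.eventually (gt_mem_nhds hε)] with n hn x hx
  calc dist (S^[n] x) a = dist (S^[n] x) (S^[n] a) := by rw [(ha.iterate n).eq]
    _ ≤ K ^ n * dist x a := by simpa using (hS.iterate n).dist_le_mul x a
    _ ≤ K ^ n * 1 := by gcongr
    _ < ε := by simpa using hn

theorem UniformlyAttracts.zero_of_addMonoidEnd {E : Type*} [SeminormedAddCommGroup E]
    (T : AddMonoid.End E) {b : E} (h : UniformlyAttracts T b) : UniformlyAttracts T 0 := by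
  obtain ⟨δ, hδ, hT⟩ := uniformlyAttracts_iff_dist.mp h
  refine uniformlyAttracts_iff_dist.mpr ⟨δ, hδ, fun ε hε => ?_⟩
  filter_upwards [hT (ε / 2) (half_pos hε)] with n hn e he
  have hbe : dist (T^[n] (b + e)) b < ε / 2 := hn _ (by simpa using he)
  have hb : dist (T^[n] b) b < ε / 2 := hn _ (by simpa using hδ)
  have hsplit : T^[n] e = T^[n] (b + e) - T^[n] b := by
    simp only [← AddMonoid.End.coe_pow, map_add, add_sub_cancel_left]
  calc dist (T^[n] e) 0 = dist (T^[n] (b + e)) (T^[n] b) := by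
        rw [hsplit, dist_zero_right, dist_eq_norm]
    _ ≤ dist (T^[n] (b + e)) b + dist (T^[n] b) b := dist_triangle_right _ _ _
    _ < ε := by linarith

namespace lp

variable {E : Type*} [NormedAddCommGroup E] {p : ℝ≥0∞}
  {B : lp (fun _ : ℕ => E) p → lp (fun _ : ℕ => E) p}

theorem shift_add (hB : ∀ (x : lp (fun _ : ℕ => E) p) (n : ℕ), (B x : ℕ → E) n = x (n + 1))
    (x y : lp (fun _ : ℕ => E) p) : B (x + y) = B x + B y :=
  lp.ext <| funext fun n => by simp [hB]

theorem norm_shift_le [Fact (1 ≤ p)] (hB : ∀ (x : lp (fun _ : ℕ => E) p) (n : ℕ), (B x : ℕ → E) n = x (n + 1))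
    (x : lp (fun _ : ℕ => E) p) : ‖B x‖ ≤ ‖x‖ := by
  rcases eq_or_ne p ∞ with rfl | hp
  · refine lp.norm_le_of_forall_le (norm_nonneg x) fun n => ?_
    rw [hB]
    exact lp.norm_apply_le_norm ENNReal.top_ne_zero x (n + 1)
  · have hq : 0 < p.toReal := ENNReal.toReal_pos (zero_lt_one.trans_le Fact.out).ne' hp
    refine lp.norm_le_of_tsum_le hq (norm_nonneg x) ?_
    rw [lp.norm_rpow_eq_tsum hq x]
    exact ((lp.memℓp (B x)).summable hq).tsum_le_tsum_of_inj (· + 1) (add_left_injective 1)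
      (fun _ _ => by positivity) (fun n => by rw [hB]) ((lp.memℓp x).summable hq)

theorem lipschitzWith_one_shift [Fact (1 ≤ p)]
    (hB : ∀ (x : lp (fun _ : ℕ => E) p) (n : ℕ), (B x : ℕ → E) n = x (n + 1)) :
    LipschitzWith 1 B := by
  simpa using AddMonoidHomClass.lipschitz_of_bound (AddMonoidHom.mk' B (shift_add hB)) 1
    fun x => by simpa using norm_shift_le hB x

theorem iterate_shift_single
    (hB : ∀ (x : lp (fun _ : ℕ => E) p) (n : ℕ), (B x : ℕ → E) n = x (n + 1)) (m : ℕ) (y : E) :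
    B^[m] (lp.single p m y) = lp.single p 0 y := by
  induction m with
  | zero => rfl
  | succ m ih =>
    have hstep : B (lp.single p (m + 1) y) = lp.single p m y :=
      lp.ext <| funext fun n => by simp [hB, lp.single_apply, Pi.single_apply]
    rw [iterate_succ_apply, hstep, ih]

theorem not_uniformlyAttracts_shift [Fact (1 ≤ p)] [NormedSpace ℝ E] [Nontrivial E]
    (hB : ∀ (x : lp (fun _ : ℕ => E) p) (n : ℕ), (B x : ℕ → E) n = x (n + 1))
    (b : lp (fun _ : ℕ => E) p) : ¬ UniformlyAttracts B b := by
  intro h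
  have h0 : UniformlyAttracts B 0 :=
    UniformlyAttracts.zero_of_addMonoidEnd (AddMonoidHom.mk' B (shift_add hB)) h
  obtain ⟨δ, hδ, hB0⟩ := uniformlyAttracts_iff_dist.mp h0
  obtain ⟨y, hy⟩ := exists_norm_eq E (half_pos hδ).le
  have hp : (0 : ℝ≥0∞) < p := zero_lt_one.trans_le Fact.out
  obtain ⟨n, hn⟩ := (hB0 (δ / 2) (half_pos hδ)).exists
  have := hn (lp.single p n y) (by simp [lp.norm_single hp, hy, hδ])
  simp [iterate_shift_single hB, lp.norm_single hp, hy] at this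

end lp

theorem shift_not_conjugate_contraction_general (p : ℝ≥0∞) [Fact (1 ≤ p)]
    (l : ℝ) (hl0 : 0 < l) (hl1 : l < 1)
    (B Bl : lp (fun _ : ℕ => ℂ) p → lp (fun _ : ℕ => ℂ) p)
    (hB : ∀ (x : lp (fun _ : ℕ => ℂ) p) (n : ℕ), (B x : ℕ → ℂ) n = x (n + 1))
    (hBl : ∀ (x : lp (fun _ : ℕ => ℂ) p) (n : ℕ), (Bl x : ℕ → ℂ) n = (l : ℂ) * x (n + 1)) :
    ¬ ∃ f : lp (fun _ : ℕ => ℂ) p ≃ₜ lp (fun _ : ℕ => ℂ) p,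
        ∀ x, f (B x) = Bl (f x) := by
  rintro ⟨f, hf⟩
  have hBl_eq : Bl = ((l : ℂ) • ·) ∘ B :=
    funext fun x => lp.ext <| funext fun n => by
      rw [comp_apply, lp.coeFn_smul, Pi.smul_apply, hBl, hB, smul_eq_mul]
  have hlip : LipschitzWith ‖(l : ℂ)‖₊ Bl := by
    simpa [hBl_eq] using (lipschitzWith_smul (l : ℂ)).comp (lp.lipschitzWith_one_shift hB)
  have hl : ‖(l : ℂ)‖₊ < 1 := by
    rw [← NNReal.coe_lt_coe, coe_nnnorm, Complex.norm_real, Real.norm_of_nonneg hl0.le]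
    exact hl1
  have hfix : IsFixedPt Bl 0 := lp.ext <| funext fun n => by simp [hBl]
  exact lp.not_uniformlyAttracts_shift hB _ ((hlip.uniformlyAttracts hl hfix).of_semiconj f hf)

/-- for `0 < λ < 1`, the shift `λB_p` is not topologically conjugate to
the unweighted backward shift `B_p`. -/
theorem shift_not_conjugate_contraction (p : ℝ≥0∞) [Fact (1 ≤ p)] (hp : p ≠ ∞)
    (l : ℝ) (hl0 : 0 < l) (hl1 : l < 1)
    (B Bl : lp (fun _ : ℕ => ℂ) p → lp (fun _ : ℕ => ℂ) p)
    (hB : ∀ (x : lp (fun _ : ℕ => ℂ) p) (n : ℕ), (B x : ℕ → ℂ) n = x (n + 1))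
    (hBl : ∀ (x : lp (fun _ : ℕ => ℂ) p) (n : ℕ), (Bl x : ℕ → ℂ) n = (l : ℂ) * x (n + 1)) :
    ¬ ∃ f : lp (fun _ : ℕ => ℂ) p ≃ₜ lp (fun _ : ℕ => ℂ) p,
        ∀ x, f (B x) = Bl (f x) :=
  shift_not_conjugate_contraction_general p l hl0 hl1 B Bl hB hBl
end

section
/- For 1 ≤ p < ∞ and nonzero complex numbers λ, ω, the operators λB_p and ωB_p are similar (i.e., S λB_p S^{-1} = ωB_p for some bounded invertible linear operator S on ℓ^p) if and only if |λ| = |ω|. -/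
/-!
If `‖l‖ = ‖w‖`, the diagonal isometry `x ↦ ((l / w) ^ n * x n)` conjugates `l B` to `w B`.
Conversely, `‖(l B)^[m]‖ ≤ ‖l‖ ^ m`, while `(w B)^[m]` maps the unit vector `e m` to
`w ^ m • e 0`; conjugating by `S` gives `‖w‖ ^ m ≤ ‖S‖ ‖S⁻¹‖ ‖l‖ ^ m` for every `m`, hence
`‖w‖ ≤ ‖l‖`, and the reverse inequality follows by conjugating with `S⁻¹`.
-/

open scoped ENNReal

theorem Memℓp.smul_of_norm_eq_one {α 𝕜 : Type*} {E : α → Type*} [NormedField 𝕜]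
    [∀ i, NormedAddCommGroup (E i)] [∀ i, NormedSpace 𝕜 (E i)] {p : ℝ≥0∞} {u : α → 𝕜}
    (hu : ∀ i, ‖u i‖ = 1) {x : ∀ i, E i} (hx : Memℓp x p) : Memℓp (fun i => u i • x i) p :=
  hx.mono' fun i => by rw [norm_smul, hu, one_mul]

namespace lp

theorem norm_le_of_apply_eq_comp {α β E : Type*} [NormedAddCommGroup E] {p : ℝ≥0∞} (hp : p ≠ 0)
    {f : β → α} (hf : f.Injective) {x : lp (fun _ : α => E) p} {y : lp (fun _ : β => E) p}
    (hxy : ∀ i, y i = x (f i)) : ‖y‖ ≤ ‖x‖ := by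
  obtain rfl | rfl | hp := p.trichotomy
  · exact (hp rfl).elim
  · exact norm_le_of_forall_le (norm_nonneg' x) fun i => hxy i ▸ norm_apply_le_norm hp x (f i)
  · refine norm_le_of_forall_sum_le hp (norm_nonneg' x) fun s => ?_
    calc ∑ i ∈ s, ‖y i‖ ^ p.toReal = ∑ j ∈ s.map ⟨f, hf⟩, ‖x j‖ ^ p.toReal := by
          simp [hxy]
      _ ≤ ‖x‖ ^ p.toReal := sum_rpow_le_norm_rpow hp x _

section UnitaryDiagonal

variable {α 𝕜 : Type*} {E : α → Type*} [NormedField 𝕜] [∀ i, NormedAddCommGroup (E i)]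
  [∀ i, NormedSpace 𝕜 (E i)] {p : ℝ≥0∞} [Fact (1 ≤ p)]

noncomputable def unitaryDiagonal (u : α → 𝕜) (hu : ∀ i, ‖u i‖ = 1) : lp E p ≃ₗᵢ[𝕜] lp E p where
  toFun x := ⟨fun i => u i • x i, (lp.memℓp x).smul_of_norm_eq_one hu⟩
  invFun x := ⟨fun i => (u i)⁻¹ • x i, (lp.memℓp x).smul_of_norm_eq_one (by simp [hu])⟩
  left_inv x := by
    ext i
    simp [smul_smul, inv_mul_cancel₀ (norm_ne_zero_iff.mp ((hu i).trans_ne one_ne_zero))]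
  right_inv x := by
    ext i
    simp [smul_smul, mul_inv_cancel₀ (norm_ne_zero_iff.mp ((hu i).trans_ne one_ne_zero))]
  map_add' x y := by ext i; exact smul_add _ _ _
  map_smul' c x := by ext i; simp [smul_comm (u i) c]
  norm_map' x := by
    have hp : p ≠ 0 := (zero_lt_one.trans_le Fact.out).ne'
    refine le_antisymm (norm_mono hp fun i => ?_) (norm_mono hp fun i => ?_) <;>
      simp [norm_smul, hu]

theorem unitaryDiagonal_apply (u : α → 𝕜) (hu : ∀ i, ‖u i‖ = 1) (x : lp E p) (i : α) :
    unitaryDiagonal u hu x i = u i • x i := rfl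

end UnitaryDiagonal

end lp

theorem le_of_forall_pow_le_mul_pow {a b C : ℝ} (hb : 0 ≤ b) (h : ∀ m : ℕ, a ^ m ≤ C * b ^ m) :
    a ≤ b := by
  obtain rfl | hb := hb.eq_or_lt
  · simpa using h 1
  by_contra! hba
  obtain ⟨m, hm⟩ := pow_unbounded_of_one_lt C ((one_lt_div hb).mpr hba)
  have := h m
  rw [div_pow, lt_div_iff₀ (by positivity)] at hm
  linarith

section WeightedShift

variable {𝕜 : Type*} [NontriviallyNormedField 𝕜] {p : ℝ≥0∞} {c : 𝕜}
  {B : lp (fun _ : ℕ => 𝕜) p → lp (fun _ : ℕ => 𝕜) p}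

theorem weightedShift_iterate_apply (hB : ∀ x n, B x n = c * x (n + 1)) (m : ℕ)
    (x : lp (fun _ : ℕ => 𝕜) p) (n : ℕ) : B^[m] x n = c ^ m * x (n + m) := by
  induction m generalizing x with
  | zero => simp
  | succ k ih => rw [Function.iterate_succ_apply, ih, hB, pow_succ, mul_assoc, add_assoc]

theorem weightedShift_iterate_single (hB : ∀ x n, B x n = c * x (n + 1)) (m : ℕ) :
    B^[m] (lp.single p m 1) = lp.single p 0 (c ^ m) := by
  ext n
  rw [weightedShift_iterate_apply hB, lp.single_apply, lp.single_apply]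
  rcases eq_or_ne n 0 with rfl | hn
  · simp
  · simp [hn]

variable [Fact (1 ≤ p)]

theorem norm_weightedShift_iterate_le (hB : ∀ x n, B x n = c * x (n + 1)) (m : ℕ)
    (x : lp (fun _ : ℕ => 𝕜) p) : ‖B^[m] x‖ ≤ ‖c‖ ^ m * ‖x‖ :=
  calc ‖B^[m] x‖ ≤ ‖c ^ m • x‖ :=
        lp.norm_le_of_apply_eq_comp (zero_lt_one.trans_le Fact.out).ne' (add_left_injective m)
          fun n => weightedShift_iterate_apply hB m x n
    _ = ‖c‖ ^ m * ‖x‖ := by rw [norm_smul, norm_pow]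

theorem norm_le_of_semiconj_weightedShift {l w : 𝕜}
    {Bl Bw : lp (fun _ : ℕ => 𝕜) p → lp (fun _ : ℕ => 𝕜) p}
    (hBl : ∀ x n, Bl x n = l * x (n + 1)) (hBw : ∀ x n, Bw x n = w * x (n + 1))
    (S : lp (fun _ : ℕ => 𝕜) p ≃L[𝕜] lp (fun _ : ℕ => 𝕜) p) (hS : Function.Semiconj S Bl Bw) :
    ‖w‖ ≤ ‖l‖ := by
  have hp : 0 < p := zero_lt_one.trans_le Fact.out
  refine le_of_forall_pow_le_mul_pow (norm_nonneg l)
    (C := ‖S.toContinuousLinearMap‖ * ‖S.symm.toContinuousLinearMap‖) fun m => ?_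
  set e : lp (fun _ : ℕ => 𝕜) p := lp.single p m 1
  have he : ‖e‖ = 1 := by simp [e, lp.norm_single hp]
  calc ‖w‖ ^ m = ‖Bw^[m] e‖ := by
        rw [weightedShift_iterate_single hBw, lp.norm_single hp, norm_pow]
    _ = ‖S (Bl^[m] (S.symm e))‖ := by rw [(hS.iterate_right m).eq, S.apply_symm_apply]
    _ ≤ ‖S.toContinuousLinearMap‖ * (‖l‖ ^ m * (‖S.symm.toContinuousLinearMap‖ * ‖e‖)) := by
        refine S.toContinuousLinearMap.le_opNorm_of_le ?_
        exact (norm_weightedShift_iterate_le hBl m _).trans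
          (mul_le_mul_of_nonneg_left (S.symm.toContinuousLinearMap.le_opNorm e) (by positivity))
    _ = _ := by rw [he]; ring

end WeightedShift

theorem shifts_similar_iff_abs_eq_general (p : ℝ≥0∞) [Fact (1 ≤ p)]
    (l w : ℂ) (hw : w ≠ 0)
    (Bl Bw : lp (fun _ : ℕ => ℂ) p → lp (fun _ : ℕ => ℂ) p)
    (hBl : ∀ (x : lp (fun _ : ℕ => ℂ) p) (n : ℕ), (Bl x : ℕ → ℂ) n = l * x (n + 1))
    (hBw : ∀ (x : lp (fun _ : ℕ => ℂ) p) (n : ℕ), (Bw x : ℕ → ℂ) n = w * x (n + 1)) :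
    (∃ S : lp (fun _ : ℕ => ℂ) p ≃L[ℂ] lp (fun _ : ℕ => ℂ) p,
        ∀ x, S (Bl x) = Bw (S x)) ↔ ‖l‖ = ‖w‖ := by
  constructor
  · rintro ⟨S, hS⟩
    exact le_antisymm
      (norm_le_of_semiconj_weightedShift hBw hBl S.symm
        (Function.Semiconj.inverse_left hS S.symm_apply_apply S.apply_symm_apply))
      (norm_le_of_semiconj_weightedShift hBl hBw S hS)
  · intro h
    have hμ : ∀ n : ℕ, ‖(l / w) ^ n‖ = 1 := fun n => by
      rw [norm_pow, norm_div, h, div_self (norm_ne_zero_iff.mpr hw), one_pow]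
    refine ⟨(lp.unitaryDiagonal _ hμ).toContinuousLinearEquiv, fun x => ?_⟩
    ext n
    simp only [LinearIsometryEquiv.coe_toContinuousLinearEquiv, lp.unitaryDiagonal_apply, hBl, hBw,
      smul_eq_mul]
    linear_combination (-(l / w) ^ n * x (n + 1)) * mul_div_cancel₀ l hw

/-- `λB_p` and `ωB_p` are similar (conjugate by a bounded invertible
linear operator) iff `|λ| = |ω|`. -/
theorem shifts_similar_iff_abs_eq (p : ℝ≥0∞) [Fact (1 ≤ p)] (hp : p ≠ ∞)
    (l w : ℂ) (hl : l ≠ 0) (hw : w ≠ 0)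
    (Bl Bw : lp (fun _ : ℕ => ℂ) p → lp (fun _ : ℕ => ℂ) p)
    (hBl : ∀ (x : lp (fun _ : ℕ => ℂ) p) (n : ℕ), (Bl x : ℕ → ℂ) n = l * x (n + 1))
    (hBw : ∀ (x : lp (fun _ : ℕ => ℂ) p) (n : ℕ), (Bw x : ℕ → ℂ) n = w * x (n + 1)) :
    (∃ S : lp (fun _ : ℕ => ℂ) p ≃L[ℂ] lp (fun _ : ℕ => ℂ) p,
        ∀ x, S (Bl x) = Bw (S x)) ↔ ‖l‖ = ‖w‖ :=
  shifts_similar_iff_abs_eq_general p l w hw Bl Bw hBl hBw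
end

section
/- Let 1 ≤ p < ∞, |λ| ≤ 1 and |ω| > 1 (λ, ω nonzero complex). Then λB_p and ωB_p are not topologically conjugate. -/
open scoped ENNReal

/-- for `|λ| ≤ 1 < |ω|`, the shifts `λB_p` and `ωB_p` are not
topologically conjugate. -/
theorem shifts_not_conjugate (p : ℝ≥0∞) [Fact (1 ≤ p)] (hp : p ≠ ∞)
    (l w : ℂ) (hl : l ≠ 0) (hw : w ≠ 0) (hl1 : ‖l‖ ≤ 1) (hw1 : 1 < ‖w‖)
    (Bl Bw : lp (fun _ : ℕ => ℂ) p → lp (fun _ : ℕ => ℂ) p)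
    (hBl : ∀ (x : lp (fun _ : ℕ => ℂ) p) (n : ℕ), (Bl x : ℕ → ℂ) n = l * x (n + 1))
    (hBw : ∀ (x : lp (fun _ : ℕ => ℂ) p) (n : ℕ), (Bw x : ℕ → ℂ) n = w * x (n + 1)) :
    ¬ ∃ h : lp (fun _ : ℕ => ℂ) p ≃ₜ lp (fun _ : ℕ => ℂ) p,
        ∀ x, h (Bl x) = Bw (h x) := by
  rintro ⟨h, hc⟩
  have hq : 0 < p.toReal := by
    have h1 : (1 : ℝ≥0∞) ≤ p := Fact.out
    have : (0 : ℝ≥0∞) < p := lt_of_lt_of_le (by norm_num) h1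
    exact ENNReal.toReal_pos this.ne' hp
  -- Every fixed point of Bl is 0.
  have fixBl : ∀ x : lp (fun _ : ℕ => ℂ) p, Bl x = x → x = 0 := by
    intro x hx
    have hcoord : ∀ n, (x : ℕ → ℂ) n = l * x (n + 1) := by
      intro n; rw [← hBl x n, hx]
    have hmono : ∀ k m : ℕ, k ≤ m → ‖(x : ℕ → ℂ) k‖ ≤ ‖(x : ℕ → ℂ) m‖ := by
      intro k m hkm
      induction m with
      | zero =>
        have hk0 : k = 0 := Nat.le_zero.mp hkm
        subst hk0; exact le_refl _
      | succ m ih =>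
        rcases Nat.lt_or_ge k (m + 1) with hk | hk
        · have h1 : ‖(x : ℕ → ℂ) k‖ ≤ ‖(x : ℕ → ℂ) m‖ := ih (Nat.lt_succ_iff.mp hk)
          have h2 : ‖(x : ℕ → ℂ) m‖ ≤ ‖(x : ℕ → ℂ) (m + 1)‖ := by
            rw [hcoord m, norm_mul]
            nlinarith [norm_nonneg ((x : ℕ → ℂ) (m + 1)), norm_nonneg l]
          linarith
        · have : k = m + 1 := le_antisymm hkm hk
          simp [this]
    -- coordinates tend to 0
    have hsum : Summable fun n => ‖(x : ℕ → ℂ) n‖ ^ p.toReal := (lp.memℓp x).summable hq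
    have htend : Filter.Tendsto (fun n => ‖(x : ℕ → ℂ) n‖ ^ p.toReal) Filter.atTop (nhds 0) :=
      hsum.tendsto_atTop_zero
    have htend' : Filter.Tendsto (fun n => ‖(x : ℕ → ℂ) n‖) Filter.atTop (nhds 0) := by
      have h2 := htend.rpow_const (p := p.toReal⁻¹) (Or.inr (inv_nonneg.mpr hq.le))
      rw [Real.zero_rpow (inv_ne_zero hq.ne')] at h2
      refine h2.congr fun n => ?_
      rw [← Real.rpow_mul (norm_nonneg _), mul_inv_cancel₀ hq.ne', Real.rpow_one]
    have hzero : ∀ k, (x : ℕ → ℂ) k = 0 := by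
      intro k
      have : ‖(x : ℕ → ℂ) k‖ ≤ 0 := by
        refine ge_of_tendsto htend' ?_
        filter_upwards [Filter.eventually_ge_atTop k] with m hm
        exact hmono k m hm
      simpa using le_antisymm this (norm_nonneg _)
    exact lp.ext (funext hzero)
  -- 0 is a fixed point of Bw.
  have hBw0 : Bw 0 = 0 := by
    apply lp.ext; funext n
    simp [hBw (0 : lp (fun _ : ℕ => ℂ) p) n, lp.coeFn_zero]
  -- the geometric vector z is a nonzero fixed point of Bw.
  have hwinv : ‖w⁻¹‖ < 1 := by
    rw [norm_inv]
    exact inv_lt_one_of_one_lt₀ hw1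
  have hzmem : Memℓp (fun k : ℕ => w⁻¹ ^ k) p := by
    apply memℓp_gen
    have : Summable fun k : ℕ => (‖w⁻¹‖ ^ p.toReal) ^ k := by
      apply summable_geometric_of_lt_one (Real.rpow_nonneg (norm_nonneg _) _)
      calc ‖w⁻¹‖ ^ p.toReal < 1 ^ p.toReal := by
            exact Real.rpow_lt_rpow (norm_nonneg _) hwinv hq
        _ = 1 := Real.one_rpow _
    refine this.congr fun k => ?_
    rw [norm_pow, ← Real.rpow_natCast ‖w⁻¹‖ k, ← Real.rpow_natCast (‖w⁻¹‖ ^ p.toReal) k,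
      ← Real.rpow_mul (norm_nonneg _), ← Real.rpow_mul (norm_nonneg _), mul_comm]
  set z : lp (fun _ : ℕ => ℂ) p := ⟨fun k => w⁻¹ ^ k, hzmem⟩ with hz
  have hzfix : Bw z = z := by
    apply lp.ext; funext n
    rw [hBw z n]
    show w * w⁻¹ ^ (n + 1) = w⁻¹ ^ n
    rw [pow_succ', ← mul_assoc, mul_inv_cancel₀ hw, one_mul]
  -- transfer fixed points through h.symm
  have hconj : ∀ y, Bl (h.symm y) = h.symm (Bw y) := by
    intro y
    have := hc (h.symm y)
    rw [h.apply_symm_apply] at this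
    calc Bl (h.symm y) = h.symm (h (Bl (h.symm y))) := (h.symm_apply_apply _).symm
      _ = h.symm (Bw y) := by rw [this]
  have h1 : h.symm z = 0 := fixBl _ (by rw [hconj, hzfix])
  have h2 : h.symm 0 = 0 := fixBl _ (by rw [hconj, hBw0])
  have : z = (0 : lp (fun _ : ℕ => ℂ) p) := h.symm.injective (h1.trans h2.symm)
  have : (z : ℕ → ℂ) 0 = 0 := by rw [this]; simp [lp.coeFn_zero]
  simp [hz] at this
end

section
/- Let T^(3) be the weighted backward shift on ℓ^2 with weight sequence consisting of alternating blocks (1/2 repeated k times followed by 2 repeated k times, for k = 1, 2, 3, …). Then there exists x ∈ ℓ^2 with ‖(T^(3))^n(x)‖_2 ≥ 1 for all n ≥ 1; in particular the orbit of x does not converge to 0. -/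
open scoped ENNReal
open Filter

/-- Topological transitivity (as in the paper). -/
def IsTransitiveMap {X : Type*} [TopologicalSpace X] (f : X → X) : Prop :=
  ∀ U V : Set X, IsOpen U → IsOpen V → U.Nonempty → V.Nonempty →
    ∃ n ≥ 1, ((f^[n]) '' U ∩ V).Nonempty

/-- Strong mixing (as in the paper). -/
def IsStronglyMixingMap {X : Type*} [TopologicalSpace X] (f : X → X) : Prop :=
  ∀ U V : Set X, IsOpen U → IsOpen V → U.Nonempty → V.Nonempty →
    ∃ m ≥ 1, ∀ n ≥ m, ((f^[n]) '' U ∩ V).Nonempty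

/-- Devaney chaos: dense periodic points together with transitivity
(which by Banks et al. imply sensitivity). -/
def IsChaoticMap {X : Type*} [TopologicalSpace X] (f : X → X) : Prop :=
  Dense {x : X | ∃ n ≥ 1, f^[n] x = x} ∧ IsTransitiveMap f

/-- The weight sequence of `T⁽³⁾` (1-indexed): alternating blocks of `1/2`'s and `2`'s,
the `k`-th pair consisting of `1/2` repeated `k` times followed by `2` repeated `k`
times, i.e. `(1/2, 2, 1/2, 1/2, 2, 2, 1/2, 1/2, 1/2, 2, 2, 2, …)`. -/
noncomputable def w3 (n : ℕ) : ℝ :=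
  if Nat.sqrt (n - 1) ≤ n - 1 - (Nat.sqrt (n - 1)) ^ 2 then 1 / 2 else 2

/-- The witness sequence: value `(1/2)^(k-1)` at coordinate `k² + k` (the last
coordinate of the `k`-th block of `2`'s), `0` elsewhere. -/
noncomputable def xw : ℕ → ℂ :=
  fun j => if (Nat.sqrt j) ^ 2 + Nat.sqrt j = j ∧ 1 ≤ Nat.sqrt j
    then ((1:ℂ)/2) ^ (Nat.sqrt j - 1) else 0

lemma xw_val (k : ℕ) (hk : 1 ≤ k) : xw (k ^ 2 + k) = ((1:ℂ)/2) ^ (k - 1) := by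
  have hs : Nat.sqrt (k ^ 2 + k) = k := Nat.sqrt_add_eq' k (by omega)
  simp [xw, hs, hk]

lemma xw_zero (j : ℕ) (h : ∀ k, 1 ≤ k → j ≠ k ^ 2 + k) : xw j = 0 := by
  rw [xw, if_neg]
  rintro ⟨h1, h2⟩
  exact h _ h2 h1.symm

lemma w3_two (k i : ℕ) (hk : 1 ≤ k) (hi : i < k) : w3 (k ^ 2 + i + 1) = 2 := by
  have hs : Nat.sqrt (k ^ 2 + i) = k := Nat.sqrt_add_eq' k (by omega)
  rw [w3, if_neg]
  simp only [Nat.add_sub_cancel]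
  rw [hs]
  omega

lemma memxw : Memℓp xw 2 := by
  apply memℓp_gen
  have h2 : ∀ y : ℝ, y ^ (2 : ℝ≥0∞).toReal = y ^ (2 : ℕ) := fun y => by
    rw [ENNReal.toReal_ofNat, ← Real.rpow_natCast y 2]; norm_num
  simp only [h2]
  have hg : Function.Injective (fun k : ℕ => (k+1)^2 + (k+1)) := by
    intro a b h
    simp only at h
    nlinarith [h]
  rw [← Function.Injective.summable_iff hg]
  · have : ((fun i => ‖xw i‖ ^ 2) ∘ fun k : ℕ => (k+1)^2 + (k+1)) = fun k => ((1:ℝ)/4) ^ k := by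
      funext k
      simp only [Function.comp, xw_val (k+1) (by omega), Nat.add_sub_cancel,
        norm_pow]
      rw [← pow_mul, mul_comm, pow_mul]
      norm_num
    rw [this]
    exact summable_geometric_of_lt_one (by norm_num) (by norm_num)
  · intro j hj
    simp only [Set.mem_range, not_exists] at hj
    rw [xw_zero]
    · simp
    · intro k hk hjk
      have hk1 : k - 1 + 1 = k := by omega
      exact hj (k - 1) (by rw [hk1]; omega)

/-- there is `x ∈ ℓ²` with `‖(T⁽³⁾)ⁿ x‖ ≥ 1` for all `n ≥ 1`; in
particular the orbit of `x` does not converge to `0`. -/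
theorem T3_orbit_not_to_zero
    (T : lp (fun _ : ℕ => ℂ) 2 → lp (fun _ : ℕ => ℂ) 2)
    (hT : ∀ (x : lp (fun _ : ℕ => ℂ) 2) (n : ℕ),
        (T x : ℕ → ℂ) n = (w3 (n + 1) : ℂ) * x (n + 1)) :
    ∃ x : lp (fun _ : ℕ => ℂ) 2,
      (∀ n ≥ 1, 1 ≤ ‖T^[n] x‖) ∧
      ¬ Filter.Tendsto (fun n : ℕ => T^[n] x) Filter.atTop (nhds 0) := by
  set x : lp (fun _ : ℕ => ℂ) 2 := ⟨xw, memxw⟩ with hx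
  have hiter : ∀ (n : ℕ) (y : lp (fun _ : ℕ => ℂ) 2) (j : ℕ),
      (T^[n] y : ℕ → ℂ) j
        = (∏ i ∈ Finset.range n, (w3 (j + i + 1) : ℂ)) * y (j + n) := by
    intro n
    induction n with
    | zero => intro y j; simp
    | succ n ih =>
      intro y j
      rw [Function.iterate_succ_apply, ih (T y) j, hT y (j + n),
        Finset.prod_range_succ, mul_assoc]
      rfl
  have key : ∀ n ≥ 1, 1 ≤ ‖T^[n] x‖ := by
    intro n hn
    have hc : (T^[n] x : ℕ → ℂ) (n ^ 2)
        = (∏ i ∈ Finset.range n, (w3 (n ^ 2 + i + 1) : ℂ)) * xw (n ^ 2 + n) := by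
      rw [hiter n x (n ^ 2)]
    have hprod : (∏ i ∈ Finset.range n, (w3 (n ^ 2 + i + 1) : ℂ)) = 2 ^ n := by
      have h2 : ∀ i ∈ Finset.range n, (w3 (n ^ 2 + i + 1) : ℂ) = 2 := fun i hi => by
        rw [w3_two n i hn (Finset.mem_range.mp hi)]; norm_num
      rw [Finset.prod_congr rfl h2]
      simp
    have hval : (T^[n] x : ℕ → ℂ) (n ^ 2) = 2 ^ n * ((1:ℂ)/2) ^ (n - 1) := by
      rw [hc, hprod, xw_val n hn]
    have hnorm : ‖(T^[n] x : ℕ → ℂ) (n ^ 2)‖ = 2 := by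
      rw [hval]
      obtain ⟨m, rfl⟩ : ∃ m, n = m + 1 := ⟨n - 1, by omega⟩
      simp only [Nat.add_sub_cancel, norm_mul, norm_pow]
      norm_num
      rw [pow_succ, mul_comm ((2:ℝ) ^ m) 2, mul_assoc, ← mul_pow]
      norm_num
    have h1 := lp.norm_apply_le_norm (by norm_num : (2 : ℝ≥0∞) ≠ 0) (T^[n] x) (n ^ 2)
    rw [hnorm] at h1
    linarith
  refine ⟨x, key, fun h => ?_⟩
  have h2 : Filter.Tendsto (fun n : ℕ => ‖T^[n] x‖) Filter.atTop (nhds 0) := by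
    simpa using h.norm
  have h3 : ∀ᶠ n : ℕ in Filter.atTop, ‖T^[n] x‖ < 1 :=
    h2.eventually_lt_const (by norm_num)
  obtain ⟨n, hn1, hn2⟩ := (h3.and (Filter.eventually_ge_atTop 1)).exists
  exact absurd (key n hn2) (not_le.mpr hn1)
end
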